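/- arXiv:2309.10701 — 3 statements merged into one kernel-verified Lean document; each statement's English description precedes it below -/
import Mathlib

section
/- Hierarchical partition lower bounds: define g(A, B) = H(X | A) + H(X | B) - H(X) for random variables A, B. If Z^s partitions into (Z^{s1}, Z^{s2}) and Z^{s̄} partitions into (Z^{s̄1}, Z^{s̄2}), with all components conditionally independent given X, then g(Z^s, Z^{s̄}) ≥ g(Z^{s1}, Z^{s2}) + (H(X | Z^{s̄}) - H(X)) ≥ g(Z^{s1}, Z^{s2}) + g(Z^{s̄1}, Z^{s̄2}) - H(X). -/
open Finset

/-- Probability of the event `X = x` under weights `w` on a finite sample space. -/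
noncomputable def pr {Ω : Type*} [Fintype Ω] (w : Ω → ℝ) {α : Type*} [DecidableEq α]
    (X : Ω → α) (x : α) : ℝ :=
  ∑ ω : Ω, if X ω = x then w ω else 0

/-- Shannon entropy of a discrete random variable `X`. -/
noncomputable def entropy {Ω : Type*} [Fintype Ω] (w : Ω → ℝ) {α : Type*}
    [Fintype α] [DecidableEq α] (X : Ω → α) : ℝ :=
  -∑ x : α, pr w X x * Real.log (pr w X x)

/-- Conditional entropy `H(X | Z)`, via the chain rule `H(X,Z) = H(X|Z) + H(Z)`. -/
noncomputable def condEntropy {Ω : Type*} [Fintype Ω] (w : Ω → ℝ) {α β : Type*}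
    [Fintype α] [DecidableEq α] [Fintype β] [DecidableEq β]
    (X : Ω → α) (Z : Ω → β) : ℝ :=
  entropy w (fun ω => (X ω, Z ω)) - entropy w Z

/-- `Zs` and `Zb` are conditionally independent given `X`. -/
def CondIndepGiven {Ω : Type*} [Fintype Ω] (w : Ω → ℝ) {α β γ : Type*}
    [DecidableEq α] [DecidableEq β] [DecidableEq γ]
    (Zs : Ω → β) (Zb : Ω → γ) (X : Ω → α) : Prop :=
  ∀ (a : β) (b : γ) (x : α),
    pr w (fun ω => (Zs ω, Zb ω, X ω)) (a, b, x) * pr w X x =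
      pr w (fun ω => (Zs ω, X ω)) (a, x) * pr w (fun ω => (Zb ω, X ω)) (b, x)

section helpers
variable {Ω : Type*} [Fintype Ω] (w : Ω → ℝ)

lemma pr_nonneg (hw : ∀ ω, 0 ≤ w ω) {α : Type*} [DecidableEq α] (Y : Ω → α) (y : α) :
    0 ≤ pr w Y y := by
  apply Finset.sum_nonneg
  intro ω _
  split <;> simp [hw ω]

lemma pr_mono (hw : ∀ ω, 0 ≤ w ω) {α β : Type*} [DecidableEq α] [DecidableEq β]
    (Y : Ω → α) (Z : Ω → β) (y : α) (z : β) (h : ∀ ω, Y ω = y → Z ω = z) :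
    pr w Y y ≤ pr w Z z := by
  apply Finset.sum_le_sum
  intro ω _
  by_cases hy : Y ω = y
  · simp [hy, h ω hy]
  · simp only [hy, if_false]
    split <;> simp [hw ω]

lemma pr_congr {α β : Type*} [DecidableEq α] [DecidableEq β]
    (Y : Ω → α) (Z : Ω → β) (y : α) (z : β) (h : ∀ ω, Y ω = y ↔ Z ω = z) :
    pr w Y y = pr w Z z := by
  refine Finset.sum_congr rfl fun ω _ => ?_
  by_cases hy : Y ω = y
  · simp [hy, (h ω).mp hy]
  · rw [if_neg hy, if_neg (fun hz => hy ((h ω).mpr hz))]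

lemma pr_sum_eq {α β κ : Type*} [DecidableEq α] [DecidableEq β] [Fintype κ] [DecidableEq κ]
    (Y : Ω → α) (Z : Ω → β) (f : κ → α) (z : β) (K : Ω → κ)
    (h : ∀ ω k, Y ω = f k ↔ (Z ω = z ∧ k = K ω)) :
    ∑ k : κ, pr w Y (f k) = pr w Z z := by
  unfold pr
  rw [Finset.sum_comm]
  refine Finset.sum_congr rfl fun ω _ => ?_
  by_cases hz : Z ω = z
  · have : ∀ k : κ, (if Y ω = f k then w ω else 0) = if K ω = k then w ω else 0 := by
      intro k
      by_cases hk : k = K ω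
      · simp [hk, (h ω (K ω)).mpr ⟨hz, rfl⟩]
      · rw [if_neg (fun hy => hk ((h ω k).mp hy).2), if_neg (fun hK => hk hK.symm)]
    rw [Finset.sum_congr rfl fun k _ => this k]
    simp [hz]
  · have : ∀ k : κ, (if Y ω = f k then w ω else 0) = 0 := by
      intro k
      exact if_neg (fun hy => hz ((h ω k).mp hy).1)
    simp [this, hz]

lemma sum_pr (hsum : ∑ ω : Ω, w ω = 1) {α : Type*} [Fintype α] [DecidableEq α]
    (Y : Ω → α) : ∑ y : α, pr w Y y = 1 := by
  rw [show (1:ℝ) = pr w (fun _ : Ω => ()) () by simp [pr, hsum]]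
  exact pr_sum_eq w Y (fun _ => ()) id () Y (by simp [eq_comm])

end helpers

lemma gibbs_term (q r s : ℝ) (hq : 0 ≤ q) (hqr : q ≤ r) (hqs : q ≤ s) :
    q - r * s ≤ q * Real.log q - q * (Real.log r + Real.log s) := by
  rcases eq_or_lt_of_le hq with h0 | h0
  · rw [← h0]
    simp only [zero_sub, zero_mul, sub_zero]
    have : 0 ≤ r * s := mul_nonneg (hq.trans hqr) (hq.trans hqs)
    linarith
  · have hr : 0 < r := lt_of_lt_of_le h0 hqr
    have hs : 0 < s := lt_of_lt_of_le h0 hqs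
    have hpos : 0 < r * s / q := div_pos (mul_pos hr hs) h0
    have key := Real.log_le_sub_one_of_pos hpos
    rw [Real.log_div (by positivity) (ne_of_gt h0), Real.log_mul (ne_of_gt hr) (ne_of_gt hs)] at key
    have hq' : q * (r * s / q) = r * s := by field_simp
    nlinarith [mul_le_mul_of_nonneg_left key (le_of_lt h0)]

section main
variable {Ω : Type*} [Fintype Ω] (w : Ω → ℝ)

/-- Subadditivity of entropy. -/
lemma entropy_pair_le (hw : ∀ ω, 0 ≤ w ω) (hsum : ∑ ω : Ω, w ω = 1)
    {α β : Type*} [Fintype α] [DecidableEq α] [Fintype β] [DecidableEq β]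
    (A : Ω → α) (B : Ω → β) :
    entropy w (fun ω => (A ω, B ω)) ≤ entropy w A + entropy w B := by
  have hmB : ∀ a, ∑ b, pr w (fun ω => (A ω, B ω)) (a, b) = pr w A a := by
    intro a
    exact pr_sum_eq w _ A (fun b => (a, b)) a B (by intro ω k; simp [Prod.ext_iff]; tauto)
  have hmA : ∀ b, ∑ a, pr w (fun ω => (A ω, B ω)) (a, b) = pr w B b := by
    intro b
    exact pr_sum_eq w _ B (fun a => (a, b)) b A (by intro ω k; simp [Prod.ext_iff]; tauto)
  have htot : ∑ a, ∑ b, pr w (fun ω => (A ω, B ω)) (a, b) = 1 := by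
    rw [← Fintype.sum_prod_type]
    exact sum_pr w hsum _
  have hrtot : ∑ a, pr w A a = 1 := sum_pr w hsum A
  have hstot : ∑ b, pr w B b = 1 := sum_pr w hsum B
  unfold entropy
  rw [Fintype.sum_prod_type]
  have hr : ∑ a, pr w A a * Real.log (pr w A a)
      = ∑ a, ∑ b, pr w (fun ω => (A ω, B ω)) (a, b) * Real.log (pr w A a) := by
    refine Finset.sum_congr rfl fun a _ => ?_
    rw [← Finset.sum_mul, hmB a]
  have hs : ∑ b, pr w B b * Real.log (pr w B b)
      = ∑ a, ∑ b, pr w (fun ω => (A ω, B ω)) (a, b) * Real.log (pr w B b) := by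
    rw [Finset.sum_comm]
    refine Finset.sum_congr rfl fun b _ => ?_
    rw [← Finset.sum_mul, hmA b]
  have key : ∑ a, ∑ b, (pr w (fun ω => (A ω, B ω)) (a, b) - pr w A a * pr w B b)
      ≤ ∑ a, ∑ b, (pr w (fun ω => (A ω, B ω)) (a, b) * Real.log (pr w (fun ω => (A ω, B ω)) (a, b))
        - pr w (fun ω => (A ω, B ω)) (a, b) * (Real.log (pr w A a) + Real.log (pr w B b))) := by
    refine Finset.sum_le_sum fun a _ => Finset.sum_le_sum fun b _ => ?_
    exact gibbs_term _ _ _ (pr_nonneg w hw _ _)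
      (pr_mono w hw _ _ _ _ (fun ω h => by simp [Prod.ext_iff] at h; simp [h.1]))
      (pr_mono w hw _ _ _ _ (fun ω h => by simp [Prod.ext_iff] at h; simp [h.2]))
  have hz : ∑ a, ∑ b, (pr w (fun ω => (A ω, B ω)) (a, b) - pr w A a * pr w B b) = 0 := by
    simp only [Finset.sum_sub_distrib]
    rw [htot]
    have : ∑ a, ∑ b, pr w A a * pr w B b = 1 := by
      simp only [← Finset.mul_sum, hstot, mul_one, hrtot]
    rw [this]; ring
  rw [hz] at key
  simp only [Finset.sum_sub_distrib] at key
  rw [hr, hs]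
  simp only [mul_add, Finset.sum_add_distrib] at key ⊢
  linarith

/-- Under conditional independence of `A`, `B` given `X`:
`H(X,(A,B)) = H(X,A) + H(X,B) - H(X)`. -/
lemma entropy_condIndep (hw : ∀ ω, 0 ≤ w ω)
    {α β γ : Type*} [Fintype α] [DecidableEq α] [Fintype β] [DecidableEq β]
    [Fintype γ] [DecidableEq γ]
    (X : Ω → α) (A : Ω → β) (B : Ω → γ)
    (hCI : ∀ x a b, pr w (fun ω => (X ω, (A ω, B ω))) (x, (a, b)) * pr w X x =
      pr w (fun ω => (X ω, A ω)) (x, a) * pr w (fun ω => (X ω, B ω)) (x, b)) :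
    entropy w (fun ω => (X ω, (A ω, B ω)))
      = entropy w (fun ω => (X ω, A ω)) + entropy w (fun ω => (X ω, B ω)) - entropy w X := by
  set J := fun ω => (X ω, (A ω, B ω)) with hJ
  have hmB : ∀ x a, ∑ b, pr w J (x, (a, b)) = pr w (fun ω => (X ω, A ω)) (x, a) := by
    intro x a
    exact pr_sum_eq w _ _ (fun b => (x, (a, b))) (x, a) B
      (by intro ω k; simp [Prod.ext_iff]; tauto)
  have hmA : ∀ x b, ∑ a, pr w J (x, (a, b)) = pr w (fun ω => (X ω, B ω)) (x, b) := by
    intro x b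
    exact pr_sum_eq w _ _ (fun a => (x, (a, b))) (x, b) A
      (by intro ω k; simp [Prod.ext_iff]; tauto)
  have hmX : ∀ x, ∑ a, ∑ b, pr w J (x, (a, b)) = pr w X x := by
    intro x
    have h := pr_sum_eq w J X (fun p : β × γ => (x, p)) x (fun ω => (A ω, B ω))
      (by intro ω k; simp [Prod.ext_iff]; tauto)
    rw [Fintype.sum_prod_type] at h
    exact h
  have hterm : ∀ x a b, pr w J (x, (a, b)) * Real.log (pr w J (x, (a, b)))
      = pr w J (x, (a, b)) * Real.log (pr w (fun ω => (X ω, A ω)) (x, a))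
        + pr w J (x, (a, b)) * Real.log (pr w (fun ω => (X ω, B ω)) (x, b))
        - pr w J (x, (a, b)) * Real.log (pr w X x) := by
    intro x a b
    set q := pr w J (x, (a, b)) with hq
    have hq0 : 0 ≤ q := pr_nonneg w hw J (x, (a, b))
    rcases eq_or_lt_of_le hq0 with h0 | h0
    · rw [← h0]; ring
    · have hqr : q ≤ pr w (fun ω => (X ω, A ω)) (x, a) :=
        pr_mono w hw _ _ _ _ (fun ω h => by simp [hJ, Prod.ext_iff] at h; simp [h.1, h.2.1])
      have hqs : q ≤ pr w (fun ω => (X ω, B ω)) (x, b) :=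
        pr_mono w hw _ _ _ _ (fun ω h => by simp [hJ, Prod.ext_iff] at h; simp [h.1, h.2.2])
      have hqp : q ≤ pr w X x :=
        pr_mono w hw _ _ _ _ (fun ω h => by simp [hJ, Prod.ext_iff] at h; simp [h.1])
      have hr := lt_of_lt_of_le h0 hqr
      have hs := lt_of_lt_of_le h0 hqs
      have hp := lt_of_lt_of_le h0 hqp
      have hlog : Real.log q + Real.log (pr w X x)
          = Real.log (pr w (fun ω => (X ω, A ω)) (x, a))
            + Real.log (pr w (fun ω => (X ω, B ω)) (x, b)) := by
        rw [← Real.log_mul (ne_of_gt h0) (ne_of_gt hp),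
          ← Real.log_mul (ne_of_gt hr) (ne_of_gt hs), hCI x a b]
      nlinarith [hlog]
  unfold entropy
  simp only [Fintype.sum_prod_type]
  have step : ∀ x : α, ∑ a, ∑ b, pr w J (x, (a, b)) * Real.log (pr w J (x, (a, b)))
      = (∑ a, pr w (fun ω => (X ω, A ω)) (x, a) * Real.log (pr w (fun ω => (X ω, A ω)) (x, a)))
        + (∑ b, pr w (fun ω => (X ω, B ω)) (x, b) * Real.log (pr w (fun ω => (X ω, B ω)) (x, b)))
        - pr w X x * Real.log (pr w X x) := by
    intro x
    have e1 : ∑ a, ∑ b, pr w J (x, (a, b)) * Real.log (pr w (fun ω => (X ω, A ω)) (x, a))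
        = ∑ a, pr w (fun ω => (X ω, A ω)) (x, a) * Real.log (pr w (fun ω => (X ω, A ω)) (x, a)) := by
      refine Finset.sum_congr rfl fun a _ => ?_
      rw [← Finset.sum_mul, hmB x a]
    have e2 : ∑ a, ∑ b, pr w J (x, (a, b)) * Real.log (pr w (fun ω => (X ω, B ω)) (x, b))
        = ∑ b, pr w (fun ω => (X ω, B ω)) (x, b) * Real.log (pr w (fun ω => (X ω, B ω)) (x, b)) := by
      rw [Finset.sum_comm]
      refine Finset.sum_congr rfl fun b _ => ?_
      rw [← Finset.sum_mul, hmA x b]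
    have e3 : ∑ a, ∑ b, pr w J (x, (a, b)) * Real.log (pr w X x)
        = pr w X x * Real.log (pr w X x) := by
      rw [← hmX x, Finset.sum_mul]
      exact Finset.sum_congr rfl fun a _ => (Finset.sum_mul _ _ _).symm
    calc ∑ a, ∑ b, pr w J (x, (a, b)) * Real.log (pr w J (x, (a, b)))
        = ∑ a, ∑ b, (pr w J (x, (a, b)) * Real.log (pr w (fun ω => (X ω, A ω)) (x, a))
            + pr w J (x, (a, b)) * Real.log (pr w (fun ω => (X ω, B ω)) (x, b))
            - pr w J (x, (a, b)) * Real.log (pr w X x)) := by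
          exact Finset.sum_congr rfl fun a _ => Finset.sum_congr rfl fun b _ => hterm x a b
      _ = _ := by
          simp only [Finset.sum_sub_distrib, Finset.sum_add_distrib, e1, e2, e3]
  rw [Finset.sum_congr rfl fun x _ => step x, Finset.sum_sub_distrib,
    Finset.sum_add_distrib]
  ring

lemma cancel_aux (p Q R : ℝ) (h0 : p = 0 → Q = 0 ∧ R = 0)
    (heq : Q * p ^ 3 = R * p ^ 2) : Q * p = R := by
  by_cases hp : p = 0
  · rw [hp, (h0 hp).1, (h0 hp).2]; ring
  · have hp2 : p ^ 2 ≠ 0 := pow_ne_zero _ hp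
    have : (Q * p) * p ^ 2 = R * p ^ 2 := by ring_nf; ring_nf at heq; linarith
    exact mul_right_cancel₀ hp2 this

end main


/-- hierarchical partition lower bounds, with
g(A, B) := H(X|A) + H(X|B) - H(X), Zs = (Zs1, Zs2) and Zb = (Zb1, Zb2):
g(Zs, Zb) ≥ g(Zs1, Zs2) + (H(X|Zb) - H(X)) ≥ g(Zs1, Zs2) + g(Zb1, Zb2) - H(X). -/
theorem hierarchical_lower_bounds {Ω : Type*} [Fintype Ω] (w : Ω → ℝ)
    (hw : ∀ ω, 0 ≤ w ω) (hsum : ∑ ω : Ω, w ω = 1)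
    {α β₁ β₂ γ₁ γ₂ : Type*} [Fintype α] [DecidableEq α]
    [Fintype β₁] [DecidableEq β₁] [Fintype β₂] [DecidableEq β₂]
    [Fintype γ₁] [DecidableEq γ₁] [Fintype γ₂] [DecidableEq γ₂]
    (X : Ω → α) (Zs1 : Ω → β₁) (Zs2 : Ω → β₂) (Zb1 : Ω → γ₁) (Zb2 : Ω → γ₂)
    -- all four components are conditionally independent given X
    (hCI : ∀ (a : β₁) (b : β₂) (c : γ₁) (d : γ₂) (x : α),
      pr w (fun ω => (Zs1 ω, Zs2 ω, Zb1 ω, Zb2 ω, X ω)) (a, b, c, d, x) *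
          (pr w X x) ^ 3 =
        pr w (fun ω => (Zs1 ω, X ω)) (a, x) * pr w (fun ω => (Zs2 ω, X ω)) (b, x) *
          pr w (fun ω => (Zb1 ω, X ω)) (c, x) * pr w (fun ω => (Zb2 ω, X ω)) (d, x)) :
    -- g(Zs, Zb) ≥ g(Zs1, Zs2) + (H(X | Zb) - H(X))
    (condEntropy w X (fun ω => (Zs1 ω, Zs2 ω)) +
        condEntropy w X (fun ω => (Zb1 ω, Zb2 ω)) - entropy w X ≥
      (condEntropy w X Zs1 + condEntropy w X Zs2 - entropy w X) +
        (condEntropy w X (fun ω => (Zb1 ω, Zb2 ω)) - entropy w X)) ∧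
    -- g(Zs1, Zs2) + (H(X|Zb) - H(X)) ≥ g(Zs1, Zs2) + g(Zb1, Zb2) - H(X)
    ((condEntropy w X Zs1 + condEntropy w X Zs2 - entropy w X) +
        (condEntropy w X (fun ω => (Zb1 ω, Zb2 ω)) - entropy w X) ≥
      (condEntropy w X Zs1 + condEntropy w X Zs2 - entropy w X) +
        (condEntropy w X Zb1 + condEntropy w X Zb2 - entropy w X) - entropy w X) := by
  classical
  -- pairwise conditional independence of (Zs1, Zs2) given X
  have CIs : ∀ x a b, pr w (fun ω => (X ω, (Zs1 ω, Zs2 ω))) (x, (a, b)) * pr w X x =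
      pr w (fun ω => (X ω, Zs1 ω)) (x, a) * pr w (fun ω => (X ω, Zs2 ω)) (x, b) := by
    intro x a b
    have hmarg : ∑ cd : γ₁ × γ₂,
        pr w (fun ω => (Zs1 ω, Zs2 ω, Zb1 ω, Zb2 ω, X ω)) (a, b, cd.1, cd.2, x)
        = pr w (fun ω => (X ω, (Zs1 ω, Zs2 ω))) (x, (a, b)) :=
      pr_sum_eq w _ _ (fun cd : γ₁ × γ₂ => (a, b, cd.1, cd.2, x)) (x, (a, b))
        (fun ω => (Zb1 ω, Zb2 ω)) (by intro ω k; simp [Prod.ext_iff]; tauto)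
    have ht : ∑ c, pr w (fun ω => (Zb1 ω, X ω)) (c, x) = pr w X x :=
      pr_sum_eq w _ X (fun c => (c, x)) x Zb1 (by intro ω k; simp [Prod.ext_iff]; tauto)
    have hu : ∑ d, pr w (fun ω => (Zb2 ω, X ω)) (d, x) = pr w X x :=
      pr_sum_eq w _ X (fun d => (d, x)) x Zb2 (by intro ω k; simp [Prod.ext_iff]; tauto)
    have hsummed : pr w (fun ω => (X ω, (Zs1 ω, Zs2 ω))) (x, (a, b)) * (pr w X x) ^ 3
        = (pr w (fun ω => (Zs1 ω, X ω)) (a, x) * pr w (fun ω => (Zs2 ω, X ω)) (b, x))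
            * (pr w X x) ^ 2 := by
      have e1 : ∑ cd : γ₁ × γ₂,
          pr w (fun ω => (Zs1 ω, Zs2 ω, Zb1 ω, Zb2 ω, X ω)) (a, b, cd.1, cd.2, x)
            * (pr w X x) ^ 3
          = ∑ cd : γ₁ × γ₂,
            pr w (fun ω => (Zs1 ω, X ω)) (a, x) * pr w (fun ω => (Zs2 ω, X ω)) (b, x) *
              pr w (fun ω => (Zb1 ω, X ω)) (cd.1, x) * pr w (fun ω => (Zb2 ω, X ω)) (cd.2, x) :=
        Finset.sum_congr rfl fun cd _ => hCI a b cd.1 cd.2 x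
      rw [← Finset.sum_mul, hmarg] at e1
      rw [e1, Fintype.sum_prod_type]
      have step1 : ∀ c, ∑ d, pr w (fun ω => (Zs1 ω, X ω)) (a, x) * pr w (fun ω => (Zs2 ω, X ω)) (b, x) *
          pr w (fun ω => (Zb1 ω, X ω)) (c, x) * pr w (fun ω => (Zb2 ω, X ω)) (d, x)
          = (∑ d, pr w (fun ω => (Zb2 ω, X ω)) (d, x)) *
            (pr w (fun ω => (Zs1 ω, X ω)) (a, x) * pr w (fun ω => (Zs2 ω, X ω)) (b, x) *
              pr w (fun ω => (Zb1 ω, X ω)) (c, x)) := by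
        intro c; rw [Finset.sum_mul]; exact Finset.sum_congr rfl fun d _ => by ring
      rw [Finset.sum_congr rfl fun c _ => step1 c, hu]
      have step2 : ∑ c, pr w X x * (pr w (fun ω => (Zs1 ω, X ω)) (a, x) *
            pr w (fun ω => (Zs2 ω, X ω)) (b, x) * pr w (fun ω => (Zb1 ω, X ω)) (c, x))
          = (∑ c, pr w (fun ω => (Zb1 ω, X ω)) (c, x)) * (pr w X x *
            (pr w (fun ω => (Zs1 ω, X ω)) (a, x) * pr w (fun ω => (Zs2 ω, X ω)) (b, x))) := by
        rw [Finset.sum_mul]; exact Finset.sum_congr rfl fun c _ => by ring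
      rw [step2, ht]; ring
    have key : pr w (fun ω => (X ω, (Zs1 ω, Zs2 ω))) (x, (a, b)) * pr w X x
        = pr w (fun ω => (Zs1 ω, X ω)) (a, x) * pr w (fun ω => (Zs2 ω, X ω)) (b, x) := by
      refine cancel_aux _ _ _ (fun hp => ⟨?_, ?_⟩) hsummed
      · refine le_antisymm ?_ (pr_nonneg w hw _ _)
        rw [← hp]
        exact pr_mono w hw _ _ _ _ (fun ω h => by simp [Prod.ext_iff] at h; simp [h.1])
      · have h1 : pr w (fun ω => (Zs1 ω, X ω)) (a, x) = 0 := by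
          refine le_antisymm ?_ (pr_nonneg w hw _ _)
          rw [← hp]
          exact pr_mono w hw _ _ _ _ (fun ω h => by simp [Prod.ext_iff] at h; simp [h.2])
        rw [h1, zero_mul]
    rw [key,
      pr_congr w (fun ω => (Zs1 ω, X ω)) (fun ω => (X ω, Zs1 ω)) (a, x) (x, a)
        (by intro ω; simp [Prod.ext_iff]; tauto),
      pr_congr w (fun ω => (Zs2 ω, X ω)) (fun ω => (X ω, Zs2 ω)) (b, x) (x, b)
        (by intro ω; simp [Prod.ext_iff]; tauto)]
  -- pairwise conditional independence of (Zb1, Zb2) given X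
  have CIb : ∀ x c d, pr w (fun ω => (X ω, (Zb1 ω, Zb2 ω))) (x, (c, d)) * pr w X x =
      pr w (fun ω => (X ω, Zb1 ω)) (x, c) * pr w (fun ω => (X ω, Zb2 ω)) (x, d) := by
    intro x c d
    have hmarg : ∑ ab : β₁ × β₂,
        pr w (fun ω => (Zs1 ω, Zs2 ω, Zb1 ω, Zb2 ω, X ω)) (ab.1, ab.2, c, d, x)
        = pr w (fun ω => (X ω, (Zb1 ω, Zb2 ω))) (x, (c, d)) :=
      pr_sum_eq w _ _ (fun ab : β₁ × β₂ => (ab.1, ab.2, c, d, x)) (x, (c, d))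
        (fun ω => (Zs1 ω, Zs2 ω)) (by intro ω k; simp [Prod.ext_iff]; tauto)
    have ht : ∑ a, pr w (fun ω => (Zs1 ω, X ω)) (a, x) = pr w X x :=
      pr_sum_eq w _ X (fun a => (a, x)) x Zs1 (by intro ω k; simp [Prod.ext_iff]; tauto)
    have hu : ∑ b, pr w (fun ω => (Zs2 ω, X ω)) (b, x) = pr w X x :=
      pr_sum_eq w _ X (fun b => (b, x)) x Zs2 (by intro ω k; simp [Prod.ext_iff]; tauto)
    have hsummed : pr w (fun ω => (X ω, (Zb1 ω, Zb2 ω))) (x, (c, d)) * (pr w X x) ^ 3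
        = (pr w (fun ω => (Zb1 ω, X ω)) (c, x) * pr w (fun ω => (Zb2 ω, X ω)) (d, x))
            * (pr w X x) ^ 2 := by
      have e1 : ∑ ab : β₁ × β₂,
          pr w (fun ω => (Zs1 ω, Zs2 ω, Zb1 ω, Zb2 ω, X ω)) (ab.1, ab.2, c, d, x)
            * (pr w X x) ^ 3
          = ∑ ab : β₁ × β₂,
            pr w (fun ω => (Zs1 ω, X ω)) (ab.1, x) * pr w (fun ω => (Zs2 ω, X ω)) (ab.2, x) *
              pr w (fun ω => (Zb1 ω, X ω)) (c, x) * pr w (fun ω => (Zb2 ω, X ω)) (d, x) :=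
        Finset.sum_congr rfl fun ab _ => hCI ab.1 ab.2 c d x
      rw [← Finset.sum_mul, hmarg] at e1
      rw [e1, Fintype.sum_prod_type]
      have step1 : ∀ a, ∑ b, pr w (fun ω => (Zs1 ω, X ω)) (a, x) * pr w (fun ω => (Zs2 ω, X ω)) (b, x) *
          pr w (fun ω => (Zb1 ω, X ω)) (c, x) * pr w (fun ω => (Zb2 ω, X ω)) (d, x)
          = (∑ b, pr w (fun ω => (Zs2 ω, X ω)) (b, x)) *
            (pr w (fun ω => (Zs1 ω, X ω)) (a, x) *
              pr w (fun ω => (Zb1 ω, X ω)) (c, x) * pr w (fun ω => (Zb2 ω, X ω)) (d, x)) := by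
        intro a; rw [Finset.sum_mul]; exact Finset.sum_congr rfl fun b _ => by ring
      rw [Finset.sum_congr rfl fun a _ => step1 a, hu]
      have step2 : ∑ a, pr w X x * (pr w (fun ω => (Zs1 ω, X ω)) (a, x) *
            pr w (fun ω => (Zb1 ω, X ω)) (c, x) * pr w (fun ω => (Zb2 ω, X ω)) (d, x))
          = (∑ a, pr w (fun ω => (Zs1 ω, X ω)) (a, x)) * (pr w X x *
            (pr w (fun ω => (Zb1 ω, X ω)) (c, x) * pr w (fun ω => (Zb2 ω, X ω)) (d, x))) := by
        rw [Finset.sum_mul]; exact Finset.sum_congr rfl fun a _ => by ring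
      rw [step2, ht]; ring
    have key : pr w (fun ω => (X ω, (Zb1 ω, Zb2 ω))) (x, (c, d)) * pr w X x
        = pr w (fun ω => (Zb1 ω, X ω)) (c, x) * pr w (fun ω => (Zb2 ω, X ω)) (d, x) := by
      refine cancel_aux _ _ _ (fun hp => ⟨?_, ?_⟩) hsummed
      · refine le_antisymm ?_ (pr_nonneg w hw _ _)
        rw [← hp]
        exact pr_mono w hw _ _ _ _ (fun ω h => by simp [Prod.ext_iff] at h; simp [h.1])
      · have h1 : pr w (fun ω => (Zb1 ω, X ω)) (c, x) = 0 := by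
          refine le_antisymm ?_ (pr_nonneg w hw _ _)
          rw [← hp]
          exact pr_mono w hw _ _ _ _ (fun ω h => by simp [Prod.ext_iff] at h; simp [h.2])
        rw [h1, zero_mul]
    rw [key,
      pr_congr w (fun ω => (Zb1 ω, X ω)) (fun ω => (X ω, Zb1 ω)) (c, x) (x, c)
        (by intro ω; simp [Prod.ext_iff]; tauto),
      pr_congr w (fun ω => (Zb2 ω, X ω)) (fun ω => (X ω, Zb2 ω)) (d, x) (x, d)
        (by intro ω; simp [Prod.ext_iff]; tauto)]
  have Hs := entropy_condIndep w hw X Zs1 Zs2 CIs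
  have Hb := entropy_condIndep w hw X Zb1 Zb2 CIb
  have Ls := entropy_pair_le w hw hsum Zs1 Zs2
  have Lb := entropy_pair_le w hw hsum Zb1 Zb2
  simp only [condEntropy]
  constructor
  · linarith
  · linarith
end

section
/- Sandwich property: combining the partition bounds, ln det(Λ + A_sᵀA_s) ≤ ln det(Λ + A_sᵀA_s + A_{s̄}ᵀA_{s̄}) ≤ ln det(Λ + A_sᵀA_s) + ln det(Λ + A_{s̄}ᵀA_{s̄}) - ln det(Λ). -/
/-!
The first inequality is monotonicity of `det` on the positive semidefinite cone. For the second,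
write `S = AᴴA`, `T = BᴴB` and stack `C = [A; B]`, so that `S + T = CᴴC`. The matrix determinant
lemma gives `det (Λ + CᴴC) = det Λ * det (1 + C Λ⁻¹ Cᴴ)`, and `1 + C Λ⁻¹ Cᴴ` is a positive
semidefinite block matrix with diagonal blocks `1 + A Λ⁻¹ Aᴴ` and `1 + B Λ⁻¹ Bᴴ`. Fischer's
inequality (via the Schur complement) bounds its determinant by the product of theirs.
-/

open Matrix

namespace Matrix

variable {m n : Type*} [Fintype m] [DecidableEq m] [Fintype n] [DecidableEq n]

open scoped MatrixOrder Pointwise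

lemma PosSemidef.one_le_det_one_add {S : Matrix n n ℝ} (hS : S.PosSemidef) : 1 ≤ (1 + S).det := by
  have hH : (1 + S).IsHermitian := (PosSemidef.one.add hS).isHermitian
  rw [hH.det_eq_prod_eigenvalues]
  refine Finset.one_le_prod fun i _ => ?_
  have hmem : hH.eigenvalues i ∈ ({1} : Set ℝ) + spectrum ℝ S := by
    rw [spectrum.singleton_add_eq, map_one]
    exact hH.eigenvalues_mem_spectrum_real i
  obtain ⟨_, rfl, μ, hμ, hμi⟩ := hmem
  simpa [← hμi] using spectrum_nonneg_of_nonneg hS.nonneg hμ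

lemma PosSemidef.det_le_det_add {P Q : Matrix n n ℝ} (hP : P.PosSemidef) (hQ : Q.PosSemidef) :
    P.det ≤ (P + Q).det := by
  by_cases hPd : P.PosDef
  · obtain ⟨Y, rfl⟩ := CStarAlgebra.nonneg_iff_eq_star_mul_self.mp hQ.nonneg
    rw [star_eq_conjTranspose, det_add_mul _ _ hPd.det_pos.ne'.isUnit]
    exact le_mul_of_one_le_right hPd.det_pos.le
      (hPd.inv.posSemidef.mul_mul_conjTranspose_same Y).one_le_det_one_add
  · rw [hP.posDef_iff_det_ne_zero, not_not] at hPd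
    exact hPd ▸ (hP.add hQ).det_nonneg

lemma PosDef.det_fromBlocks_le {A : Matrix m m ℝ} {B : Matrix m n ℝ} {D : Matrix n n ℝ}
    (hA : A.PosDef) (h : (fromBlocks A B Bᴴ D).PosSemidef) :
    (fromBlocks A B Bᴴ D).det ≤ A.det * D.det := by
  have := hA.isUnit.invertible
  have hSchur := (hA.fromBlocks₁₁ B D).mp h
  rw [det_fromBlocks₁₁, invOf_eq_nonsing_inv]
  refine mul_le_mul_of_nonneg_left ?_ hA.det_pos.le
  simpa using hSchur.det_le_det_add (hA.inv.posSemidef.conjTranspose_mul_mul_same B)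

lemma PosDef.det_add_add_mul_det_le {Λ S T : Matrix n n ℝ} (hΛ : Λ.PosDef) (hS : S.PosSemidef)
    (hT : T.PosSemidef) : (Λ + S + T).det * Λ.det ≤ (Λ + S).det * (Λ + T).det := by
  obtain ⟨A, rfl⟩ := CStarAlgebra.nonneg_iff_eq_star_mul_self.mp hS.nonneg
  obtain ⟨B, rfl⟩ := CStarAlgebra.nonneg_iff_eq_star_mul_self.mp hT.nonneg
  simp only [star_eq_conjTranspose]
  set C := fromRows A B
  have hC : Aᴴ * A + Bᴴ * B = Cᴴ * C := by
    rw [conjTranspose_fromRows_eq_fromCols_conjTranspose, fromCols_mul_fromRows]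
  have hblocks : 1 + C * Λ⁻¹ * Cᴴ =
      fromBlocks (1 + A * Λ⁻¹ * Aᴴ) (A * Λ⁻¹ * Bᴴ) (A * Λ⁻¹ * Bᴴ)ᴴ (1 + B * Λ⁻¹ * Bᴴ) := by
    rw [conjTranspose_fromRows_eq_fromCols_conjTranspose, fromRows_mul, fromRows_mul_fromCols,
      ← fromBlocks_one, fromBlocks_add, conjTranspose_mul, conjTranspose_mul, hΛ.inv.isHermitian.eq]
    simp [Matrix.mul_assoc]
  have hΛdet := hΛ.det_pos.ne'.isUnit
  rw [add_assoc, hC, det_add_mul _ _ hΛdet, det_add_mul _ _ hΛdet, det_add_mul _ _ hΛdet, hblocks]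
  have hfischer := PosDef.det_fromBlocks_le
    (PosDef.one.add_posSemidef (hΛ.inv.posSemidef.mul_mul_conjTranspose_same A))
    (hblocks ▸ PosSemidef.one.add (hΛ.inv.posSemidef.mul_mul_conjTranspose_same C))
  linarith [mul_le_mul_of_nonneg_left hfischer (mul_self_nonneg Λ.det)]

end Matrix

/-- sandwich property,
ln det(Λ + AₛᵀAₛ) ≤ ln det(Λ + AₛᵀAₛ + AᵦᵀAᵦ)
  ≤ ln det(Λ + AₛᵀAₛ) + ln det(Λ + AᵦᵀAᵦ) - ln det(Λ). -/
theorem logdet_sandwich {n p q : ℕ}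
    (Λ : Matrix (Fin n) (Fin n) ℝ) (hΛ : Λ.PosDef)
    (As : Matrix (Fin p) (Fin n) ℝ) (Ab : Matrix (Fin q) (Fin n) ℝ) :
    Real.log (Λ + Asᵀ * As).det ≤ Real.log (Λ + Asᵀ * As + Abᵀ * Ab).det ∧
      Real.log (Λ + Asᵀ * As + Abᵀ * Ab).det ≤
        Real.log (Λ + Asᵀ * As).det + Real.log (Λ + Abᵀ * Ab).det -
          Real.log Λ.det := by
  have hS : (Asᵀ * As).PosSemidef := by simpa using posSemidef_conjTranspose_mul_self As
  have hT : (Abᵀ * Ab).PosSemidef := by simpa using posSemidef_conjTranspose_mul_self Ab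
  have hΛS := hΛ.add_posSemidef hS
  have hΛT := hΛ.add_posSemidef hT
  refine ⟨Real.log_le_log hΛS.det_pos (hΛS.posSemidef.det_le_det_add hT), ?_⟩
  rw [le_sub_iff_add_le, ← Real.log_mul (hΛS.add_posSemidef hT).det_pos.ne' hΛ.det_pos.ne',
    ← Real.log_mul hΛS.det_pos.ne' hΛT.det_pos.ne']
  exact Real.log_le_log (mul_pos (hΛS.add_posSemidef hT).det_pos hΛ.det_pos)
    (hΛ.det_add_add_mul_det_le hS hT)
end

section
/- For a Gaussian belief with information matrix Λ (positive definite) and measurement Jacobian A partitioned into equal halves A_s and A_{s̄} (each with m/2 rows), the conditional entropy -C + (1/2) ln det(Λ + AᵀA) lies between the lower bound (1/2)[ln det(Λ + A_sᵀA_s) + ln det(Λ + A_{s̄}ᵀA_{s̄}) - ln det Λ] and the upper bound given by either half alone: (1/2) ln det(Λ + A_sᵀA_s) ≤ (1/2) ln det(Λ + AᵀA). -/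
/-! With `AᵀA = B + C` for the Gram matrices `B = AₛᵀAₛ`, `C = A_{s̄}ᵀA_{s̄}`, the first
inequality is monotonicity of `det` under adding a positive semidefinite matrix; writing the
addend as `QᴴQ`, the matrix determinant lemma reduces it to `det (1 + R) ≥ 1` for `R ⪰ 0`.
The second is submodularity of `log det`: the determinant lemma gives
`det (Λ + B + C) / det (Λ + B) = det (1 + Q (Λ + B)⁻¹ Qᴴ)` and
`det (Λ + C) / det Λ = det (1 + Q Λ⁻¹ Qᴴ)`, and `(Λ + B)⁻¹ ≤ Λ⁻¹` in the Loewner order makes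
the first ratio at most the second. -/

open Matrix
open scoped MatrixOrder ComplexOrder

namespace Matrix

variable {ι : Type*} [Fintype ι] [DecidableEq ι]

theorem det_conjStarAlgAut {R : Type*} [CommRing R] [StarRing R]
    (u : unitary (Matrix ι ι R)) (x : Matrix ι ι R) :
    (Unitary.conjStarAlgAut R _ u x).det = x.det := by
  rw [Unitary.conjStarAlgAut_apply, det_mul_comm, ← Matrix.mul_assoc, Unitary.coe_star_mul_self,
    Matrix.one_mul]

theorem PosSemidef.one_le_det_one_add_s19 {R : Matrix ι ι ℝ} (hR : R.PosSemidef) :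
    1 ≤ (1 + R).det := by
  have hH := hR.isHermitian
  rw [hH.spectral_theorem, ← map_one (Unitary.conjStarAlgAut ℝ _ hH.eigenvectorUnitary), ← map_add,
    det_conjStarAlgAut, ← diagonal_one, diagonal_add, det_diagonal]
  exact Finset.one_le_prod fun i _ => by simpa using hR.eigenvalues_nonneg i

theorem PosSemidef.exists_eq_conjTranspose_mul_self {𝕜 : Type*} [RCLike 𝕜] {S : Matrix ι ι 𝕜}
    (hS : S.PosSemidef) : ∃ Q : Matrix ι ι 𝕜, S = Qᴴ * Q :=
  ⟨CFC.sqrt S, by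
    rw [(CFC.sqrt_nonneg S).posSemidef.isHermitian.eq, CFC.sqrt_mul_sqrt_self S hS.nonneg]⟩

theorem PosDef.isUnit_det {𝕜 : Type*} [RCLike 𝕜] {P : Matrix ι ι 𝕜} (hP : P.PosDef) :
    IsUnit P.det :=
  (isUnit_iff_isUnit_det P).mp hP.isUnit

theorem PosDef.det_le_det_add {P S : Matrix ι ι ℝ} (hP : P.PosDef) (hS : S.PosSemidef) :
    P.det ≤ (P + S).det := by
  obtain ⟨Q, rfl⟩ := hS.exists_eq_conjTranspose_mul_self
  rw [det_add_mul _ _ hP.isUnit_det]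
  exact le_mul_of_one_le_right hP.det_pos.le
    (hP.inv.posSemidef.mul_mul_conjTranspose_same Q).one_le_det_one_add_s19

theorem PosDef.inv_add_le_inv {𝕜 : Type*} [RCLike 𝕜] {Λ B : Matrix ι ι 𝕜} (hΛ : Λ.PosDef)
    (hB : B.PosSemidef) : (Λ + B)⁻¹ ≤ Λ⁻¹ := by
  have hM := hΛ.add_posSemidef hB
  have key : Λ⁻¹ - (Λ + B)⁻¹ = (Λ + B)⁻¹ᴴ * (B + Bᴴ * Λ⁻¹ * B) * (Λ + B)⁻¹ := by
    have hcross : B + B * Λ⁻¹ * B = (Λ + B) * Λ⁻¹ * (Λ + B) - (Λ + B) := by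
      simp only [Matrix.add_mul, Matrix.mul_add, mul_nonsing_inv _ hΛ.isUnit_det,
        Matrix.mul_assoc, nonsing_inv_mul _ hΛ.isUnit_det, Matrix.one_mul, Matrix.mul_one]
      abel
    rw [hM.isHermitian.inv.eq, hB.isHermitian.eq, hcross]
    simp only [Matrix.mul_sub, Matrix.sub_mul, Matrix.mul_assoc,
      nonsing_inv_mul_cancel_left _ _ hM.isUnit_det, mul_nonsing_inv _ hM.isUnit_det,
      Matrix.mul_one]
  rw [le_iff, key]
  exact (hB.add (hΛ.inv.posSemidef.conjTranspose_mul_mul_same B)).conjTranspose_mul_mul_same _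

theorem PosDef.det_add_add_mul_det_le_s19 {Λ B C : Matrix ι ι ℝ} (hΛ : Λ.PosDef)
    (hB : B.PosSemidef) (hC : C.PosSemidef) :
    (Λ + B + C).det * Λ.det ≤ (Λ + B).det * (Λ + C).det := by
  have hM := hΛ.add_posSemidef hB
  obtain ⟨Q, rfl⟩ := hC.exists_eq_conjTranspose_mul_self
  rw [det_add_mul _ _ hM.isUnit_det, det_add_mul _ _ hΛ.isUnit_det]
  have hsplit : 1 + Q * Λ⁻¹ * Qᴴ = (1 + Q * (Λ + B)⁻¹ * Qᴴ) + Q * (Λ⁻¹ - (Λ + B)⁻¹) * Qᴴ := by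
    simp only [Matrix.mul_sub, Matrix.sub_mul]
    abel
  have hle : (1 + Q * (Λ + B)⁻¹ * Qᴴ).det ≤ (1 + Q * Λ⁻¹ * Qᴴ).det := by
    have hX := PosDef.one.add_posSemidef (hM.inv.posSemidef.mul_mul_conjTranspose_same Q)
    rw [hsplit]
    exact hX.det_le_det_add ((hΛ.inv_add_le_inv hB).mul_mul_conjTranspose_same Q)
  calc (Λ + B).det * (1 + Q * (Λ + B)⁻¹ * Qᴴ).det * Λ.det
      ≤ (Λ + B).det * (1 + Q * Λ⁻¹ * Qᴴ).det * Λ.det := by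
        gcongr
        · exact hΛ.det_pos.le
        · exact hM.det_pos.le
    _ = (Λ + B).det * (Λ.det * (1 + Q * Λ⁻¹ * Qᴴ).det) := by ring

end Matrix

/-- for a Gaussian belief with information matrix Λ and measurement
Jacobian A partitioned into halves Aₛ, Aᵦ (so that AᵀA = AₛᵀAₛ + AᵦᵀAᵦ), the quantity
-C + (1/2) ln det(Λ + AᵀA) lies between -C + (1/2) ln det(Λ + AₛᵀAₛ) (a half alone)
and -C + (1/2)[ln det(Λ + AₛᵀAₛ) + ln det(Λ + AᵦᵀAᵦ) - ln det Λ]. -/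
theorem gaussian_entropy_bounds {n m : ℕ}
    (Λ : Matrix (Fin n) (Fin n) ℝ) (hΛ : Λ.PosDef)
    (A : Matrix (Fin m) (Fin n) ℝ)
    (As Ab : Matrix (Fin (m / 2)) (Fin n) ℝ)
    (hpart : Aᵀ * A = Asᵀ * As + Abᵀ * Ab) (C : ℝ) :
    (-C + (1 / 2) * Real.log (Λ + Asᵀ * As).det ≤
        -C + (1 / 2) * Real.log (Λ + Aᵀ * A).det) ∧
      (-C + (1 / 2) * Real.log (Λ + Aᵀ * A).det ≤
        -C + (1 / 2) * (Real.log (Λ + Asᵀ * As).det +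
          Real.log (Λ + Abᵀ * Ab).det - Real.log Λ.det)) := by
  have hs : (Asᵀ * As).PosSemidef := posSemidef_conjTranspose_mul_self As
  have hb : (Abᵀ * Ab).PosSemidef := posSemidef_conjTranspose_mul_self Ab
  have hΛs := hΛ.add_posSemidef hs
  have hΛsb := hΛs.add_posSemidef hb
  have hmono : Real.log (Λ + Asᵀ * As).det ≤ Real.log (Λ + Asᵀ * As + Abᵀ * Ab).det :=
    Real.log_le_log hΛs.det_pos (hΛs.det_le_det_add hb)
  have hsubmod : Real.log (Λ + Asᵀ * As + Abᵀ * Ab).det + Real.log Λ.det ≤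
      Real.log (Λ + Asᵀ * As).det + Real.log (Λ + Abᵀ * Ab).det := by
    rw [← Real.log_mul hΛsb.det_pos.ne' hΛ.det_pos.ne',
      ← Real.log_mul hΛs.det_pos.ne' (hΛ.add_posSemidef hb).det_pos.ne']
    exact Real.log_le_log (mul_pos hΛsb.det_pos hΛ.det_pos) (hΛ.det_add_add_mul_det_le_s19 hs hb)
  rw [hpart, ← add_assoc]
  constructor <;> linarith
end
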